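/- In the exterior algebra of ℂ⁶, with η₀ := α∧β∧γ + i·(α∧ᾱ + β∧β̄)∧(γ + γ̄) + ᾱ∧β̄∧γ̄, θ := i·(α∧ᾱ + β∧β̄)∧γ, and its formal conjugate θ' := i·(α∧ᾱ + β∧β̄)∧γ̄, the following hold: (i) (α∧β∧γ)∧η₀ = −i·Ω, so under the normalization ∫_X Ω = 1 one has Q(u₀, η₀) = −∫_X u₀∧η₀ = i ≠ 0 for u₀ = α∧β∧γ; (ii) θ∧θ' = −2i·Ω, so H(η₀^{2,1}, η₀^{2,1}) = −i·(−2i) = −2 < 0 for η₀^{2,1} = i(α∧ᾱ + β∧β̄)∧γ, where H(u,v) = −i∫_X u∧v̄. Hence the real class η₀ satisfies both conditions Q(u₀,η₀) ≠ 0 and H(η₀^{2,1},η₀^{2,1}) < 0 required in Proposition 5.4. -/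
import Mathlib


noncomputable section

/-- The exterior algebra of `ℂ⁶` in which all cohomology computations on the Iwasawa
manifold are carried out. -/
abbrev Λ6 : Type := ExteriorAlgebra ℂ (Fin 6 → ℂ)

/-- The degree-one generator corresponding to the `i`-th basis vector of `ℂ⁶`. -/
def gen (i : Fin 6) : Λ6 := ExteriorAlgebra.ι ℂ (Pi.single i (1 : ℂ))

/-- `α` -/ def α : Λ6 := gen 0
/-- `β` -/ def β : Λ6 := gen 1
/-- `γ` -/ def γ : Λ6 := gen 2
/-- `ᾱ` -/ def α' : Λ6 := gen 3
/-- `β̄` -/ def β' : Λ6 := gen 4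
/-- `γ̄` -/ def γ' : Λ6 := gen 5

/-- The normalized volume form `Ω = (i·α∧ᾱ)∧(i·β∧β̄)∧(i·γ∧γ̄)`. -/
def Ω : Λ6 := (Complex.I • (α * α')) * (Complex.I • (β * β')) * (Complex.I • (γ * γ'))

/-- The real 3-class `η₀ = α∧β∧γ + i(α∧ᾱ + β∧β̄)∧(γ+γ̄) + ᾱ∧β̄∧γ̄`. -/
def η₀ : Λ6 := α * β * γ + Complex.I • ((α * α' + β * β') * (γ + γ')) + α' * β' * γ'

/-- `θ = η₀^{2,1} = i(α∧ᾱ + β∧β̄)∧γ`. -/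
def θ : Λ6 := Complex.I • ((α * α' + β * β') * γ)

/-- `θ' = conj(η₀^{2,1}) = i(α∧ᾱ + β∧β̄)∧γ̄`. -/
def θ' : Λ6 := Complex.I • ((α * α' + β * β') * γ')


lemma gsq (i : Fin 6) : gen i * gen i = 0 := ExteriorAlgebra.ι_sq_zero _
lemma gsw (i j : Fin 6) : gen i * gen j = -(gen j * gen i) :=
  eq_neg_of_add_eq_zero_left (ExteriorAlgebra.ι_add_mul_swap _ _)
lemma gsqc (i : Fin 6) (x : Λ6) : gen i * (gen i * x) = 0 := by
  rw [← mul_assoc, gsq, zero_mul]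
lemma gswc (i j : Fin 6) (x : Λ6) : gen i * (gen j * x) = -(gen j * (gen i * x)) := by
  rw [← mul_assoc, gsw, neg_mul, mul_assoc]

-- squares
lemma e00 : α * α = 0 := gsq 0
lemma e11 : β * β = 0 := gsq 1
lemma e22 : γ * γ = 0 := gsq 2
lemma e33 : α' * α' = 0 := gsq 3
lemma e44 : β' * β' = 0 := gsq 4
lemma e55 : γ' * γ' = 0 := gsq 5
lemma c00 (x : Λ6) : α * (α * x) = 0 := gsqc 0 x
lemma c11 (x : Λ6) : β * (β * x) = 0 := gsqc 1 x
lemma c22 (x : Λ6) : γ * (γ * x) = 0 := gsqc 2 x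
lemma c33 (x : Λ6) : α' * (α' * x) = 0 := gsqc 3 x
lemma c44 (x : Λ6) : β' * (β' * x) = 0 := gsqc 4 x
lemma c55 (x : Λ6) : γ' * (γ' * x) = 0 := gsqc 5 x
-- order: α β γ α' β' γ'   (indices 0..5); oriented: bigger*smaller → -(smaller*bigger)
lemma e10 : β * α = -(α * β) := gsw 1 0
lemma e20 : γ * α = -(α * γ) := gsw 2 0
lemma e21 : γ * β = -(β * γ) := gsw 2 1
lemma e30 : α' * α = -(α * α') := gsw 3 0
lemma e31 : α' * β = -(β * α') := gsw 3 1
lemma e32 : α' * γ = -(γ * α') := gsw 3 2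
lemma e40 : β' * α = -(α * β') := gsw 4 0
lemma e41 : β' * β = -(β * β') := gsw 4 1
lemma e42 : β' * γ = -(γ * β') := gsw 4 2
lemma e43 : β' * α' = -(α' * β') := gsw 4 3
lemma e50 : γ' * α = -(α * γ') := gsw 5 0
lemma e51 : γ' * β = -(β * γ') := gsw 5 1
lemma e52 : γ' * γ = -(γ * γ') := gsw 5 2
lemma e53 : γ' * α' = -(α' * γ') := gsw 5 3
lemma e54 : γ' * β' = -(β' * γ') := gsw 5 4
lemma d10 (x : Λ6) : β * (α * x) = -(α * (β * x)) := gswc 1 0 x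
lemma d20 (x : Λ6) : γ * (α * x) = -(α * (γ * x)) := gswc 2 0 x
lemma d21 (x : Λ6) : γ * (β * x) = -(β * (γ * x)) := gswc 2 1 x
lemma d30 (x : Λ6) : α' * (α * x) = -(α * (α' * x)) := gswc 3 0 x
lemma d31 (x : Λ6) : α' * (β * x) = -(β * (α' * x)) := gswc 3 1 x
lemma d32 (x : Λ6) : α' * (γ * x) = -(γ * (α' * x)) := gswc 3 2 x
lemma d40 (x : Λ6) : β' * (α * x) = -(α * (β' * x)) := gswc 4 0 x
lemma d41 (x : Λ6) : β' * (β * x) = -(β * (β' * x)) := gswc 4 1 x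
lemma d42 (x : Λ6) : β' * (γ * x) = -(γ * (β' * x)) := gswc 4 2 x
lemma d43 (x : Λ6) : β' * (α' * x) = -(α' * (β' * x)) := gswc 4 3 x
lemma d50 (x : Λ6) : γ' * (α * x) = -(α * (γ' * x)) := gswc 5 0 x
lemma d51 (x : Λ6) : γ' * (β * x) = -(β * (γ' * x)) := gswc 5 1 x
lemma d52 (x : Λ6) : γ' * (γ * x) = -(γ * (γ' * x)) := gswc 5 2 x
lemma d53 (x : Λ6) : γ' * (α' * x) = -(α' * (γ' * x)) := gswc 5 3 x
lemma d54 (x : Λ6) : γ' * (β' * x) = -(β' * (γ' * x)) := gswc 5 4 x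


/-- The class `η₀` satisfies the two conditions of Proposition 5.4:
`Q(u₀,η₀) = i ≠ 0` and `H(η₀^{2,1},η₀^{2,1}) = −2 < 0`. -/
theorem eta0_satisfies_conditions :
    -- (i) (α∧β∧γ)∧η₀ = −i·Ω, i.e. Q(u₀,η₀) = −(−i) = i ≠ 0
    (α * β * γ) * η₀ = (-Complex.I) • Ω ∧
    -(-Complex.I) = Complex.I ∧ Complex.I ≠ 0 ∧
    -- (ii) θ∧θ' = −2i·Ω, i.e. H(η₀^{2,1},η₀^{2,1}) = −i·(−2i) = −2 < 0
    θ * θ' = (-(2 * Complex.I)) • Ω ∧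
    (-Complex.I) * (-(2 * Complex.I)) = -2 ∧ ((-2 : ℝ) < 0) := by
  refine ⟨?_, by simp, Complex.I_ne_zero, ?_, by ring_nf; simp [Complex.I_sq], by norm_num⟩
  · simp only [η₀, Ω, mul_add, add_mul, smul_mul_assoc, mul_smul_comm, mul_assoc, smul_smul,
      e00,e11,e22,e33,e44,e55,c00,c11,c22,c33,c44,c55,
      e10,e20,e21,e30,e31,e32,e40,e41,e42,e43,e50,e51,e52,e53,e54,
      d10,d20,d21,d30,d31,d32,d40,d41,d42,d43,d50,d51,d52,d53,d54,
      mul_neg, neg_mul, neg_neg, mul_zero, zero_mul, smul_neg, neg_smul, smul_zero,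
      Complex.I_mul_I, add_zero, zero_add, neg_zero, one_smul, neg_neg]
  · simp only [θ, θ', Ω, mul_add, add_mul, smul_mul_assoc, mul_smul_comm, mul_assoc, smul_smul,
      e00,e11,e22,e33,e44,e55,c00,c11,c22,c33,c44,c55,
      e10,e20,e21,e30,e31,e32,e40,e41,e42,e43,e50,e51,e52,e53,e54,
      d10,d20,d21,d30,d31,d32,d40,d41,d42,d43,d50,d51,d52,d53,d54,
      mul_neg, neg_mul, neg_neg, mul_zero, zero_mul, smul_neg, neg_smul, smul_zero,
      Complex.I_mul_I, add_zero, zero_add, neg_zero, one_smul, neg_neg]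
    simp only [smul_add, smul_neg, smul_smul, Complex.I_mul_I, neg_smul, neg_neg, one_smul]
    module
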